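/- arXiv:2108.06480 — 10 statements merged into one kernel-verified Lean document; each statement's English description precedes it below -/
import Mathlib

section
/- Let (a_n)_{n≥0} be a sequence of strictly positive real numbers. The series ∑_{n=0}^∞ a_n converges if and only if there exists a sequence (ζ_n)_{n≥0} of strictly positive real numbers such that ζ_n · a_n / a_{n+1} − ζ_{n+1} = 1 for all n ≥ 0. -/
/-- Tong's version of Kummer's test: a positive series `∑ aₙ` converges
if and only if there is a positive sequence `ζₙ` with
`ζₙ · aₙ / aₙ₊₁ − ζₙ₊₁ = 1` for all `n`. -/
theorem tong_kummer_test (a : ℕ → ℝ) (ha : ∀ n, 0 < a n) :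
    Summable a ↔
      ∃ ζ : ℕ → ℝ, (∀ n, 0 < ζ n) ∧
        ∀ n, ζ n * a n / a (n + 1) - ζ (n + 1) = 1 := by
  constructor
  · intro hs
    set T : ℕ → ℝ := fun n => ∑' k, a (n + 1 + k) with hT
    have hTsum : ∀ n, Summable (fun k => a (n + 1 + k)) := by
      intro n
      exact ((summable_nat_add_iff (n + 1)).mpr hs).congr (by intro k; simp [Nat.add_comm])
    have hTpos : ∀ n, 0 < T n := by
      intro n
      exact Summable.tsum_pos (hTsum n) (fun i => (ha _).le) 0 (ha _)
    have hTrec : ∀ n, T n = a (n + 1) + T (n + 1) := by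
      intro n
      rw [hT]
      simp only
      rw [Summable.tsum_eq_zero_add (hTsum n)]
      congr 1
      exact tsum_congr fun k => congrArg a (by omega)
    refine ⟨fun n => T n / a n, fun n => div_pos (hTpos n) (ha n), fun n => ?_⟩
    have h1 : a n ≠ 0 := (ha n).ne'
    have h2 : a (n + 1) ≠ 0 := (ha (n + 1)).ne'
    field_simp
    rw [hTrec n]; ring
  · rintro ⟨ζ, hζ, h⟩
    have key : ∀ n, ζ n * a n - ζ (n + 1) * a (n + 1) = a (n + 1) := by
      intro n
      have := h n
      have h2 : a (n + 1) ≠ 0 := (ha (n + 1)).ne'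
      field_simp at this
      linarith
    have hsum : ∀ N, ∑ i ∈ Finset.range N, a (i + 1) ≤ ζ 0 * a 0 := by
      intro N
      have : ∑ i ∈ Finset.range N, a (i + 1)
          = ζ 0 * a 0 - ζ N * a N := by
        have := Finset.sum_range_sub' (fun n => ζ n * a n) N
        simp only [key] at this
        exact this
      rw [this]
      have : 0 < ζ N * a N := mul_pos (hζ N) (ha N)
      linarith
    have h1 : Summable (fun i => a (i + 1)) :=
      summable_of_sum_range_le (fun i => (ha _).le) hsum
    exact (summable_nat_add_iff 1).mp h1
end

section
/- Let (a_n)_{n≥0} be a sequence of strictly positive real numbers and suppose there exists a sequence (ζ_n)_{n≥0} of strictly positive real numbers satisfying ζ_n · a_n / a_{n+1} − ζ_{n+1} = 1 for all n ≥ 0. Then the series ∑_{n=0}^∞ a_n converges. -/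
/-- Sufficiency in Tong's version of Kummer's test: if there is a positive
sequence `ζₙ` with `ζₙ · aₙ / aₙ₊₁ − ζₙ₊₁ = 1`, then `∑ aₙ` converges. -/
theorem tong_kummer_sufficiency (a ζ : ℕ → ℝ) (ha : ∀ n, 0 < a n)
    (hζ : ∀ n, 0 < ζ n)
    (hrec : ∀ n, ζ n * a n / a (n + 1) - ζ (n + 1) = 1) :
    Summable a := by
  have key : ∀ n, a n * ζ n - a (n + 1) * ζ (n + 1) = a (n + 1) := by
    intro n
    have h := hrec n
    have hpos := (ha (n + 1)).ne'
    field_simp at h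
    nlinarith [h]
  have hsum : ∀ n, ∑ k ∈ Finset.range n, a (k + 1) = a 0 * ζ 0 - a n * ζ n := by
    intro n
    induction n with
    | zero => simp
    | succ n ih =>
      rw [Finset.sum_range_succ, ih]
      linarith [key n]
  have hb : Summable (fun n => a (n + 1)) := by
    apply summable_of_sum_range_le (c := a 0 * ζ 0)
      (fun n => (ha (n + 1)).le)
    intro n
    rw [hsum n]
    nlinarith [mul_pos (ha n) (hζ n)]
  exact (summable_nat_add_iff 1).mp hb
end

section
/- Let (a_n)_{n≥0} be a sequence of strictly positive real numbers such that the series ∑_{n=0}^∞ a_n converges. Then there exists a sequence (ζ_n)_{n≥0} of strictly positive real numbers satisfying ζ_n · a_n / a_{n+1} − ζ_{n+1} = 1 for all n ≥ 0. -/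
set_option maxHeartbeats 1000000

/-- Necessity in Tong's version of Kummer's test: if the positive series
`∑ aₙ` converges, then there exists a positive sequence `ζₙ` with
`ζₙ · aₙ / aₙ₊₁ − ζₙ₊₁ = 1` for all `n`. -/
theorem tong_kummer_necessity (a : ℕ → ℝ) (ha : ∀ n, 0 < a n)
    (hsum : Summable a) :
    ∃ ζ : ℕ → ℝ, (∀ n, 0 < ζ n) ∧
      ∀ n, ζ n * a n / a (n + 1) - ζ (n + 1) = 1 := by
  refine ⟨fun n => (∑' k, a (n + 1 + k)) / a n, ?_, ?_⟩
  · intro n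
    apply div_pos _ (ha n)
    have hs : Summable fun k => a (n + 1 + k) := by
      simpa [add_comm] using (summable_nat_add_iff (n + 1)).2 hsum
    exact Summable.tsum_pos hs (fun k => (ha _).le) 0 (ha _)
  · intro n
    have hs : Summable fun k => a (n + 1 + k) := by
      simpa [add_comm] using (summable_nat_add_iff (n + 1)).2 hsum
    have key : (∑' k, a (n + 1 + k)) = a (n + 1) + ∑' k, a (n + 1 + 1 + k) := by
      rw [Summable.tsum_eq_zero_add hs]
      congr 1
      apply tsum_congr; intro k; ring_nf
    have h1 : a n ≠ 0 := (ha n).ne'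
    have h2 : a (n + 1) ≠ 0 := (ha (n + 1)).ne'
    field_simp
    rw [key]; ring
end

section
/- Let (a_n)_{n≥0} be a sequence of strictly positive real numbers such that the series ∑_{n=0}^∞ a_n converges, and let c > 0. Define ζ_n = (c + ∑_{k=n+1}^∞ a_k) / a_n for every n ≥ 0. Then ζ_n > 0 for all n, and ζ_n · a_n / a_{n+1} − ζ_{n+1} = 1 for all n ≥ 0. -/
/-- For a convergent positive series and any `c > 0`, the sequence
`ζₙ = (c + ∑_{k=n+1}^∞ aₖ) / aₙ` is positive and satisfies the Kummer–Tong
condition `ζₙ · aₙ / aₙ₊₁ − ζₙ₊₁ = 1`. -/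
theorem tong_explicit_sequence (a : ℕ → ℝ) (ha : ∀ n, 0 < a n)
    (hsum : Summable a) (c : ℝ) (hc : 0 < c) (ζ : ℕ → ℝ)
    (hζ : ∀ n, ζ n = (c + ∑' k : ℕ, a (n + 1 + k)) / a n) :
    (∀ n, 0 < ζ n) ∧ ∀ n, ζ n * a n / a (n + 1) - ζ (n + 1) = 1 := by
  have htail : ∀ n, (0:ℝ) ≤ ∑' k : ℕ, a (n + 1 + k) := fun n =>
    tsum_nonneg fun k => (ha _).le
  constructor
  · intro n
    rw [hζ n]
    exact div_pos (by linarith [htail n]) (ha n)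
  · intro n
    have hs : Summable fun k => a (n + 1 + k) := by
      simpa [add_comm] using (summable_nat_add_iff (n + 1)).2 hsum
    have hsplit : (∑' k : ℕ, a (n + 1 + k)) = a (n + 1) + ∑' k : ℕ, a (n + 2 + k) := by
      rw [Summable.tsum_eq_zero_add hs]
      congr 1
      apply tsum_congr
      intro k
      congr 1
      omega
    rw [hζ n, hζ (n + 1)]
    rw [div_mul_cancel₀ _ (ha n).ne']
    have h2 : n + 1 + 1 = n + 2 := by omega
    rw [h2, hsplit]
    rw [div_sub_div_same,
      show c + (a (n + 1) + ∑' k : ℕ, a (n + 2 + k)) - (c + ∑' k : ℕ, a (n + 2 + k))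
        = a (n + 1) by ring]
    exact div_self (ha (n + 1)).ne'
end

section
/- Let (a_j)_{j≥0} be a sequence of nonnegative real numbers such that the power series ∑_{j=0}^∞ a_j x^j converges for all real x with |x| < 1, and suppose that for some γ ≥ 0 and some real A, (1−x)^γ · ∑_{j=0}^∞ a_j x^j tends to A as x tends to 1 from below. Then (∑_{j=0}^N a_j) / N^γ tends to A / Γ(1+γ) as N → ∞, where Γ is Euler's Gamma function. -/
open Filter Topology MeasureTheory Set

namespace HLT

noncomputable def J (γ : ℝ) (G : ℝ → ℝ) : ℝ :=
  ∫ u in Ioi (0:ℝ), G (Real.exp (-u)) * (Real.exp (-u) * u ^ (γ - 1)) / Real.Gamma γ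

noncomputable def Lam (a : ℕ → ℝ) (γ : ℝ) (G : ℝ → ℝ) (ε : ℝ) : ℝ :=
  ε ^ γ * ∑' j : ℕ, a j * Real.exp (-ε) ^ j * G (Real.exp (-ε) ^ j)

variable {a : ℕ → ℝ} {γ : ℝ}

def HCONV (a : ℕ → ℝ) : Prop := ∀ x : ℝ, |x| < 1 → Summable (fun j : ℕ => a j * x ^ j)

theorem exp_pow_mem {ε : ℝ} (hε : 0 < ε) (j : ℕ) : Real.exp (-ε) ^ j ∈ Ioc (0:ℝ) 1 :=
  ⟨pow_pos (Real.exp_pos _) _, pow_le_one₀ (Real.exp_pos _).le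
    (Real.exp_le_one_iff.mpr (by linarith))⟩

theorem summable_base (hconv : HCONV a) {ε : ℝ} (hε : 0 < ε) :
    Summable (fun j : ℕ => a j * Real.exp (-ε) ^ j) := by
  refine hconv _ ?_
  rw [abs_of_pos (Real.exp_pos _)]
  exact Real.exp_lt_one_iff.mpr (by linarith)

theorem summable_G (ha : ∀ j, 0 ≤ a j) (hconv : HCONV a) {ε : ℝ} (hε : 0 < ε) {G : ℝ → ℝ} {M : ℝ}
    (hb : ∀ t ∈ Ioc (0:ℝ) 1, |G t| ≤ M) :
    Summable (fun j : ℕ => a j * Real.exp (-ε) ^ j * G (Real.exp (-ε) ^ j)) := by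
  have hs := (summable_base hconv hε).mul_left M
  refine Summable.of_abs (Summable.of_nonneg_of_le (fun j => abs_nonneg _) (fun j => ?_) hs)
  have h1 : 0 ≤ a j * Real.exp (-ε) ^ j :=
    mul_nonneg (ha j) (pow_pos (Real.exp_pos _) _).le
  rw [abs_mul, abs_of_nonneg h1]
  calc a j * Real.exp (-ε) ^ j * |G (Real.exp (-ε) ^ j)|
      ≤ a j * Real.exp (-ε) ^ j * M :=
        mul_le_mul_of_nonneg_left (hb _ (exp_pow_mem hε j)) h1
    _ = M * (a j * Real.exp (-ε) ^ j) := by ring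

theorem lam_mono (ha : ∀ j, 0 ≤ a j) (hconv : HCONV a) {ε : ℝ} (hε : 0 < ε) {G₁ G₂ : ℝ → ℝ} {M₁ M₂ : ℝ}
    (hb₁ : ∀ t ∈ Ioc (0:ℝ) 1, |G₁ t| ≤ M₁) (hb₂ : ∀ t ∈ Ioc (0:ℝ) 1, |G₂ t| ≤ M₂)
    (hle : ∀ t ∈ Ioc (0:ℝ) 1, G₁ t ≤ G₂ t) :
    Lam a γ G₁ ε ≤ Lam a γ G₂ ε := by
  unfold Lam
  refine mul_le_mul_of_nonneg_left ?_ (Real.rpow_nonneg hε.le _)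
  refine Summable.tsum_le_tsum (fun j => ?_) (summable_G ha hconv hε hb₁) (summable_G ha hconv hε hb₂)
  exact mul_le_mul_of_nonneg_left (hle _ (exp_pow_mem hε j))
    (mul_nonneg (ha j) (pow_pos (Real.exp_pos _) _).le)

theorem lam_nonneg (ha : ∀ j, 0 ≤ a j) (hconv : HCONV a) {ε : ℝ} (hε : 0 < ε) {G : ℝ → ℝ}
    (hG : ∀ t ∈ Ioc (0:ℝ) 1, 0 ≤ G t) : 0 ≤ Lam a γ G ε := by
  unfold Lam
  refine mul_nonneg (Real.rpow_nonneg hε.le _) (tsum_nonneg fun j => ?_)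
  exact mul_nonneg (mul_nonneg (ha j) (pow_pos (Real.exp_pos _) _).le)
    (hG _ (exp_pow_mem hε j))

theorem lam_add_const (ha : ∀ j, 0 ≤ a j) (hconv : HCONV a) {ε : ℝ} (hε : 0 < ε) {G : ℝ → ℝ} {M : ℝ}
    (hb : ∀ t ∈ Ioc (0:ℝ) 1, |G t| ≤ M) (d : ℝ) :
    Lam a γ (fun t => G t + d) ε = Lam a γ G ε + d * Lam a γ (fun _ => 1) ε := by
  unfold Lam
  have e1 : ∀ j : ℕ, a j * Real.exp (-ε) ^ j * (G (Real.exp (-ε) ^ j) + d)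
      = a j * Real.exp (-ε) ^ j * G (Real.exp (-ε) ^ j)
        + d * (a j * Real.exp (-ε) ^ j * 1) := by intro j; ring
  rw [tsum_congr e1, Summable.tsum_add (summable_G ha hconv hε hb)
    (((summable_G ha hconv hε (G := fun _ => (1:ℝ)) (M := 1)
      (fun t _ => by norm_num))).mul_left d), tsum_mul_left]
  ring

theorem lam_diff_le (ha : ∀ j, 0 ≤ a j) (hconv : HCONV a) {ε : ℝ} (hε : 0 < ε) {G₁ G₂ : ℝ → ℝ} {M₁ M₂ d : ℝ}
    (hb₁ : ∀ t ∈ Ioc (0:ℝ) 1, |G₁ t| ≤ M₁) (hb₂ : ∀ t ∈ Ioc (0:ℝ) 1, |G₂ t| ≤ M₂)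
    (hd : ∀ t ∈ Ioc (0:ℝ) 1, |G₁ t - G₂ t| ≤ d) :
    |Lam a γ G₁ ε - Lam a γ G₂ ε| ≤ d * Lam a γ (fun _ => 1) ε := by
  have hd0 : 0 ≤ d := le_trans (abs_nonneg _) (hd 1 ⟨one_pos, le_refl 1⟩)
  have hb₂' : ∀ t ∈ Ioc (0:ℝ) 1, |G₂ t + d| ≤ M₂ + d := fun t ht =>
    (abs_add_le _ _).trans (by rw [abs_of_nonneg hd0]; exact add_le_add_left (hb₂ t ht) d)
  have hb₁' : ∀ t ∈ Ioc (0:ℝ) 1, |G₁ t + d| ≤ M₁ + d := fun t ht =>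
    (abs_add_le _ _).trans (by rw [abs_of_nonneg hd0]; exact add_le_add_left (hb₁ t ht) d)
  have h1 : Lam a γ G₁ ε ≤ Lam a γ G₂ ε + d * Lam a γ (fun _ => 1) ε := by
    rw [← lam_add_const ha hconv hε hb₂ d]
    exact lam_mono ha hconv hε hb₁ hb₂' fun t ht =>
      by linarith [(abs_le.mp (hd t ht)).2]
  have h2 : Lam a γ G₂ ε ≤ Lam a γ G₁ ε + d * Lam a γ (fun _ => 1) ε := by
    rw [← lam_add_const ha hconv hε hb₁ d]
    exact lam_mono ha hconv hε hb₂ hb₁' fun t ht =>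
      by linarith [(abs_le.mp (hd t ht)).1]
  exact abs_sub_le_iff.mpr ⟨by linarith, by linarith⟩

theorem lam_sum_eq (ha : ∀ j, 0 ≤ a j) (hconv : HCONV a) {ε : ℝ} (hε : 0 < ε) (s : Finset ℕ) (c : ℕ → ℝ) :
    Lam a γ (fun t => ∑ k ∈ s, c k * t ^ k) ε
      = ∑ k ∈ s, c k * Lam a γ (fun t => t ^ k) ε := by
  unfold Lam
  have hmb : ∀ k : ℕ, ∀ t ∈ Ioc (0:ℝ) 1, |t ^ k| ≤ 1 := by
    intro k t ht
    rw [abs_of_nonneg (pow_nonneg ht.1.le _)]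
    exact pow_le_one₀ ht.1.le ht.2
  have e1 : ∀ j : ℕ, a j * Real.exp (-ε) ^ j * (∑ k ∈ s, c k * (Real.exp (-ε) ^ j) ^ k)
      = ∑ k ∈ s, c k * (a j * Real.exp (-ε) ^ j * (Real.exp (-ε) ^ j) ^ k) := by
    intro j
    rw [Finset.mul_sum]
    exact Finset.sum_congr rfl fun k _ => by ring
  rw [tsum_congr e1, Summable.tsum_finsetSum (fun k _ => (summable_G ha hconv hε (hmb k)).mul_left (c k)),
    Finset.mul_sum]
  exact Finset.sum_congr rfl fun k _ => by rw [tsum_mul_left]; ring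


theorem tendsto_neg_mul : ∀ {c : ℝ}, 0 < c →
    Tendsto (fun ε : ℝ => -(c * ε)) (𝓝[>] (0:ℝ)) (𝓝[≠] (0:ℝ)) := by
  intro c hc
  rw [tendsto_nhdsWithin_iff]
  constructor
  · have : Tendsto (fun ε : ℝ => -(c * ε)) (𝓝 (0:ℝ)) (𝓝 (-(c * 0))) :=
      (tendsto_id.const_mul c).neg
    simpa using this.mono_left nhdsWithin_le_nhds
  · filter_upwards [self_mem_nhdsWithin] with ε (hε : 0 < ε)
    simp only [mem_compl_iff, mem_singleton_iff]
    nlinarith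

theorem ratio_lim {c : ℝ} (hc : 0 < c) :
    Tendsto (fun ε : ℝ => ε / (1 - Real.exp (-(c * ε)))) (𝓝[>] (0:ℝ)) (𝓝 c⁻¹) := by
  have hslope : Tendsto (fun t : ℝ => (Real.exp t - 1) / t) (𝓝[≠] (0:ℝ)) (𝓝 1) := by
    have h := hasDerivAt_iff_tendsto_slope.mp (Real.hasDerivAt_exp 0)
    rw [Real.exp_zero] at h
    refine h.congr (fun t => ?_)
    rw [slope_def_field]
    simp [Real.exp_zero]
  have h2 : Tendsto (fun ε : ℝ => c * ((Real.exp (-(c * ε)) - 1) / (-(c * ε))))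
      (𝓝[>] (0:ℝ)) (𝓝 (c * 1)) :=
    ((hslope.comp (tendsto_neg_mul hc)).const_mul c)
  rw [mul_one] at h2
  have h3 : Tendsto (fun ε : ℝ => (1 - Real.exp (-(c * ε))) / ε) (𝓝[>] (0:ℝ)) (𝓝 c) := by
    refine h2.congr' ?_
    filter_upwards [self_mem_nhdsWithin] with ε (hε : 0 < ε)
    field_simp
    ring
  have h4 := h3.inv₀ (ne_of_gt hc)
  refine h4.congr' ?_
  filter_upwards [self_mem_nhdsWithin] with ε (hε : 0 < ε)
  rw [inv_div]

theorem tendsto_y {c : ℝ} (hc : 0 < c) :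
    Tendsto (fun ε : ℝ => Real.exp (-(c * ε))) (𝓝[>] (0:ℝ)) (𝓝[<] (1:ℝ)) := by
  rw [tendsto_nhdsWithin_iff]
  constructor
  · have : Tendsto (fun ε : ℝ => Real.exp (-(c * ε))) (𝓝 (0:ℝ)) (𝓝 (Real.exp (-(c * 0)))) :=
      (Real.continuous_exp.comp ((continuous_const.mul continuous_id).neg)).tendsto 0
    simp only [mul_zero, neg_zero, Real.exp_zero] at this
    exact this.mono_left nhdsWithin_le_nhds
  · filter_upwards [self_mem_nhdsWithin] with ε (hε : 0 < ε)
    exact Real.exp_lt_one_iff.mpr (by nlinarith)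

theorem lam_monomial {a : ℕ → ℝ} {γ A : ℝ} (hγ : 0 ≤ γ)
    (hlim : Tendsto (fun x : ℝ => (1 - x) ^ γ * ∑' j : ℕ, a j * x ^ j)
      (𝓝[<] (1 : ℝ)) (𝓝 A)) (k : ℕ) :
    Tendsto (Lam a γ (fun t => t ^ k)) (𝓝[>] (0:ℝ)) (𝓝 ((((k:ℝ)+1)⁻¹) ^ γ * A)) := by
  set c : ℝ := (k:ℝ) + 1 with hc_def
  have hc : 0 < c := by positivity
  have key : ∀ ε : ℝ, 0 < ε → Lam a γ (fun t => t ^ k) ε =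
      (ε / (1 - Real.exp (-(c * ε)))) ^ γ *
        ((1 - Real.exp (-(c * ε))) ^ γ * ∑' j : ℕ, a j * Real.exp (-(c * ε)) ^ j) := by
    intro ε hε
    have hy : Real.exp (-(c * ε)) < 1 := Real.exp_lt_one_iff.mpr (by nlinarith)
    have hy' : (0:ℝ) < 1 - Real.exp (-(c * ε)) := by linarith
    unfold Lam
    have e1 : ∀ j : ℕ, a j * Real.exp (-ε) ^ j * (Real.exp (-ε) ^ j) ^ k
        = a j * Real.exp (-(c * ε)) ^ j := by
      intro j
      have : Real.exp (-(c * ε)) = Real.exp (-ε) ^ (k + 1) := by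
        rw [← Real.exp_nat_mul]
        congr 1
        push_cast [hc_def]
        ring
      rw [this, ← pow_mul, ← pow_mul, mul_assoc, ← pow_add]
      congr 2
      ring
    rw [tsum_congr e1, ← mul_assoc, ← Real.mul_rpow (by positivity) hy'.le]
    congr 2
    field_simp
    rw [div_self (by rw [mul_comm]; exact hy'.ne')]
  have t1 : Tendsto (fun ε : ℝ => (ε / (1 - Real.exp (-(c * ε)))) ^ γ)
      (𝓝[>] (0:ℝ)) (𝓝 (c⁻¹ ^ γ)) := by
    have := (Real.continuousAt_rpow_const c⁻¹ γ (Or.inr hγ)).tendsto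
    exact this.comp (ratio_lim hc)
  have t2 : Tendsto (fun ε : ℝ =>
      (1 - Real.exp (-(c * ε))) ^ γ * ∑' j : ℕ, a j * Real.exp (-(c * ε)) ^ j)
      (𝓝[>] (0:ℝ)) (𝓝 A) := hlim.comp (tendsto_y hc)
  have := t1.mul t2
  refine this.congr' ?_
  filter_upwards [self_mem_nhdsWithin] with ε (hε : 0 < ε)
  exact (key ε hε).symm



theorem J_integrable {γ : ℝ} (hγ : 0 < γ) {G : ℝ → ℝ} {M : ℝ}
    (hm : AEStronglyMeasurable (fun u => G (Real.exp (-u))) (volume.restrict (Ioi 0)))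
    (hb : ∀ t ∈ Ioc (0:ℝ) 1, |G t| ≤ M) :
    IntegrableOn (fun u => G (Real.exp (-u)) * (Real.exp (-u) * u ^ (γ - 1)) / Real.Gamma γ)
      (Ioi 0) := by
  have hΓ : 0 < Real.Gamma γ := Real.Gamma_pos_of_pos hγ
  have hW : IntegrableOn (fun u : ℝ => Real.exp (-u) * u ^ (γ - 1)) (Ioi 0) :=
    Real.GammaIntegral_convergent hγ
  refine Integrable.mono' ((hW.const_mul M).div_const (Real.Gamma γ)) ?_ ?_
  · exact (hm.mul hW.aestronglyMeasurable).mul aestronglyMeasurable_const |>.congr (Filter.EventuallyEq.of_eq (funext fun u => by rw [Pi.mul_apply, Pi.mul_apply]; rw [div_eq_mul_inv]))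
  · filter_upwards [self_mem_ae_restrict measurableSet_Ioi] with u (hu : (0:ℝ) < u)
    have hmem : Real.exp (-u) ∈ Ioc (0:ℝ) 1 :=
      ⟨Real.exp_pos _, Real.exp_le_one_iff.mpr (by linarith)⟩
    have hWnn : 0 ≤ Real.exp (-u) * u ^ (γ - 1) :=
      mul_nonneg (Real.exp_pos _).le (Real.rpow_nonneg hu.le _)
    have hmain : ‖G (Real.exp (-u)) * (Real.exp (-u) * u ^ (γ - 1))‖
        ≤ M * (Real.exp (-u) * u ^ (γ - 1)) := by
      rw [norm_mul, Real.norm_eq_abs, Real.norm_eq_abs, abs_of_nonneg hWnn]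
      exact mul_le_mul_of_nonneg_right (hb _ hmem) hWnn
    have : ‖G (Real.exp (-u)) * (Real.exp (-u) * u ^ (γ - 1)) / Real.Gamma γ‖
        = ‖G (Real.exp (-u)) * (Real.exp (-u) * u ^ (γ - 1))‖ / Real.Gamma γ := by
      rw [norm_div, Real.norm_eq_abs (Real.Gamma γ), abs_of_pos hΓ]
    rw [this]
    exact (div_le_div_iff_of_pos_right hΓ).mpr hmain

theorem monomial_comp_aesm (k : ℕ) :
    AEStronglyMeasurable (fun u : ℝ => (Real.exp (-u)) ^ k) (volume.restrict (Ioi 0)) :=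
  ((Real.continuous_exp.comp continuous_neg).pow k).aestronglyMeasurable

theorem monomial_bound (k : ℕ) : ∀ t ∈ Ioc (0:ℝ) 1, |t ^ k| ≤ 1 := by
  intro t ht
  rw [abs_of_nonneg (pow_nonneg ht.1.le _)]
  exact pow_le_one₀ ht.1.le ht.2

theorem integ_monomial {γ : ℝ} (hγ : 0 < γ) (k : ℕ) :
    ∫ u in Ioi (0:ℝ), (Real.exp (-u)) ^ k * (Real.exp (-u) * u ^ (γ - 1)) / Real.Gamma γ
      = (((k:ℝ) + 1)⁻¹) ^ γ := by
  have hΓ : 0 < Real.Gamma γ := Real.Gamma_pos_of_pos hγ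
  have hc : (0:ℝ) < (k:ℝ) + 1 := by positivity
  have e1 : ∀ u ∈ Ioi (0:ℝ), (Real.exp (-u)) ^ k * (Real.exp (-u) * u ^ (γ - 1)) / Real.Gamma γ
      = u ^ (γ - 1) * Real.exp (-(((k:ℝ) + 1) * u)) / Real.Gamma γ := by
    intro u _
    congr 1
    rw [← Real.exp_nat_mul, ← mul_assoc, ← Real.exp_add]
    ring_nf
  rw [setIntegral_congr_fun measurableSet_Ioi e1, integral_div,
    Real.integral_rpow_mul_exp_neg_mul_Ioi hγ hc]
  rw [one_div]
  field_simp


theorem J_const {γ : ℝ} (hγ : 0 < γ) (d : ℝ) : J γ (fun _ => d) = d := by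
  have h0 := integ_monomial hγ 0
  simp only [pow_zero, one_mul, Nat.cast_zero, zero_add, inv_one, Real.one_rpow] at h0
  unfold J
  have e1 : ∀ u ∈ Ioi (0:ℝ), d * (Real.exp (-u) * u ^ (γ - 1)) / Real.Gamma γ
      = d * (Real.exp (-u) * u ^ (γ - 1) / Real.Gamma γ) := by
    intro u _; ring
  rw [setIntegral_congr_fun measurableSet_Ioi e1, integral_const_mul, h0, mul_one]

theorem J_mono {γ : ℝ} (hγ : 0 < γ) {G₁ G₂ : ℝ → ℝ} {M₁ M₂ : ℝ}
    (hm₁ : AEStronglyMeasurable (fun u => G₁ (Real.exp (-u))) (volume.restrict (Ioi 0)))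
    (hm₂ : AEStronglyMeasurable (fun u => G₂ (Real.exp (-u))) (volume.restrict (Ioi 0)))
    (hb₁ : ∀ t ∈ Ioc (0:ℝ) 1, |G₁ t| ≤ M₁) (hb₂ : ∀ t ∈ Ioc (0:ℝ) 1, |G₂ t| ≤ M₂)
    (hle : ∀ t ∈ Ioc (0:ℝ) 1, G₁ t ≤ G₂ t) : J γ G₁ ≤ J γ G₂ := by
  have hΓ : 0 < Real.Gamma γ := Real.Gamma_pos_of_pos hγ
  refine setIntegral_mono_on (J_integrable hγ hm₁ hb₁) (J_integrable hγ hm₂ hb₂)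
    measurableSet_Ioi (fun u hu => ?_)
  have hu' : (0:ℝ) < u := hu
  have hmem : Real.exp (-u) ∈ Ioc (0:ℝ) 1 :=
    ⟨Real.exp_pos _, Real.exp_le_one_iff.mpr (by linarith)⟩
  have hWnn : 0 ≤ Real.exp (-u) * u ^ (γ - 1) :=
    mul_nonneg (Real.exp_pos _).le (Real.rpow_nonneg hu'.le _)
  have h := hle _ hmem
  gcongr

theorem J_add_const {γ : ℝ} (hγ : 0 < γ) {G : ℝ → ℝ} {M : ℝ}
    (hm : AEStronglyMeasurable (fun u => G (Real.exp (-u))) (volume.restrict (Ioi 0)))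
    (hb : ∀ t ∈ Ioc (0:ℝ) 1, |G t| ≤ M) (d : ℝ) :
    J γ (fun t => G t + d) = J γ G + d := by
  unfold J
  have e1 : ∀ u ∈ Ioi (0:ℝ), (G (Real.exp (-u)) + d) * (Real.exp (-u) * u ^ (γ - 1)) / Real.Gamma γ
      = G (Real.exp (-u)) * (Real.exp (-u) * u ^ (γ - 1)) / Real.Gamma γ
        + d * (Real.exp (-u) * u ^ (γ - 1)) / Real.Gamma γ := by
    intro u _; ring
  rw [setIntegral_congr_fun measurableSet_Ioi e1,
    integral_add (J_integrable hγ hm hb)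
      (J_integrable hγ (G := fun _ => d) aestronglyMeasurable_const
        (M := |d|) (fun t _ => le_refl _))]
  have := J_const hγ d
  unfold J at this
  rw [this]

theorem J_diff_le {γ : ℝ} (hγ : 0 < γ) {G₁ G₂ : ℝ → ℝ} {M₁ M₂ d : ℝ}
    (hm₁ : AEStronglyMeasurable (fun u => G₁ (Real.exp (-u))) (volume.restrict (Ioi 0)))
    (hm₂ : AEStronglyMeasurable (fun u => G₂ (Real.exp (-u))) (volume.restrict (Ioi 0)))
    (hb₁ : ∀ t ∈ Ioc (0:ℝ) 1, |G₁ t| ≤ M₁) (hb₂ : ∀ t ∈ Ioc (0:ℝ) 1, |G₂ t| ≤ M₂)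
    (hd : ∀ t ∈ Ioc (0:ℝ) 1, |G₁ t - G₂ t| ≤ d) :
    |J γ G₁ - J γ G₂| ≤ d := by
  have hd0 : 0 ≤ d := le_trans (abs_nonneg _) (hd 1 ⟨one_pos, le_refl 1⟩)
  have hb₂' : ∀ t ∈ Ioc (0:ℝ) 1, |G₂ t + d| ≤ M₂ + d := fun t ht =>
    (abs_add_le _ _).trans (by rw [abs_of_nonneg hd0]; exact add_le_add_left (hb₂ t ht) d)
  have hb₁' : ∀ t ∈ Ioc (0:ℝ) 1, |G₁ t + d| ≤ M₁ + d := fun t ht =>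
    (abs_add_le _ _).trans (by rw [abs_of_nonneg hd0]; exact add_le_add_left (hb₁ t ht) d)
  have h1 : J γ G₁ ≤ J γ G₂ + d := by
    rw [← J_add_const hγ hm₂ hb₂ d]
    exact J_mono hγ hm₁ (hm₂.add aestronglyMeasurable_const) hb₁ hb₂'
      (fun t ht => by linarith [(abs_le.mp (hd t ht)).2])
  have h2 : J γ G₂ ≤ J γ G₁ + d := by
    rw [← J_add_const hγ hm₁ hb₁ d]
    exact J_mono hγ hm₂ (hm₁.add aestronglyMeasurable_const) hb₂ hb₁'
      (fun t ht => by linarith [(abs_le.mp (hd t ht)).1])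
  exact abs_sub_le_iff.mpr ⟨by linarith, by linarith⟩

theorem J_polysum {γ : ℝ} (hγ : 0 < γ) (s : Finset ℕ) (c : ℕ → ℝ) :
    J γ (fun t => ∑ k ∈ s, c k * t ^ k) = ∑ k ∈ s, c k * (((k:ℝ) + 1)⁻¹) ^ γ := by
  unfold J
  have e1 : ∀ u ∈ Ioi (0:ℝ),
      (∑ k ∈ s, c k * Real.exp (-u) ^ k) * (Real.exp (-u) * u ^ (γ - 1)) / Real.Gamma γ
      = ∑ k ∈ s, c k * (Real.exp (-u) ^ k * (Real.exp (-u) * u ^ (γ - 1)) / Real.Gamma γ) := by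
    intro u _
    rw [Finset.sum_mul, Finset.sum_div]
    exact Finset.sum_congr rfl fun k _ => by ring
  rw [setIntegral_congr_fun measurableSet_Ioi e1,
    integral_finset_sum s (fun k _ =>
      (J_integrable hγ (G := fun t => t ^ k) (monomial_comp_aesm k) (monomial_bound k)).const_mul (c k))]
  exact Finset.sum_congr rfl fun k _ => by
    rw [integral_const_mul, integ_monomial hγ k]

theorem A_nonneg {a : ℕ → ℝ} (ha : ∀ j, 0 ≤ a j) {γ A : ℝ}
    (hlim : Tendsto (fun x : ℝ => (1 - x) ^ γ * ∑' j : ℕ, a j * x ^ j)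
      (𝓝[<] (1 : ℝ)) (𝓝 A)) : 0 ≤ A := by
  refine ge_of_tendsto hlim ?_
  filter_upwards [Ioo_mem_nhdsLT_of_mem (show (1:ℝ) ∈ Ioc (0:ℝ) 1 from ⟨one_pos, le_refl _⟩)]
    with x hx
  exact mul_nonneg (Real.rpow_nonneg (by linarith [hx.2] : (0:ℝ) ≤ 1 - x) _)
    (tsum_nonneg fun j => mul_nonneg (ha j) (pow_nonneg hx.1.le j))

theorem lam_one_lim {a : ℕ → ℝ} {γ A : ℝ} (hγ : 0 ≤ γ)
    (hlim : Tendsto (fun x : ℝ => (1 - x) ^ γ * ∑' j : ℕ, a j * x ^ j)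
      (𝓝[<] (1 : ℝ)) (𝓝 A)) :
    Tendsto (Lam a γ (fun _ => 1)) (𝓝[>] (0:ℝ)) (𝓝 A) := by
  have h := lam_monomial hγ hlim 0
  simp only [pow_zero, Nat.cast_zero, zero_add, inv_one, Real.one_rpow, one_mul] at h
  exact h

theorem lam_poly {a : ℕ → ℝ} (ha : ∀ j, 0 ≤ a j) (hconv : HCONV a) {γ A : ℝ} (hγ : 0 < γ)
    (hlim : Tendsto (fun x : ℝ => (1 - x) ^ γ * ∑' j : ℕ, a j * x ^ j)
      (𝓝[<] (1 : ℝ)) (𝓝 A)) (p : Polynomial ℝ) :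
    Tendsto (Lam a γ (fun t => Polynomial.eval t p)) (𝓝[>] (0:ℝ))
      (𝓝 (A * J γ (fun t => Polynomial.eval t p))) := by
  set s := Finset.range (p.natDegree + 1) with hs
  have hfun : (fun t : ℝ => Polynomial.eval t p)
      = fun t => ∑ k ∈ s, p.coeff k * t ^ k :=
    funext fun t => Polynomial.eval_eq_sum_range _
  rw [hfun, J_polysum hγ s p.coeff]
  have hlimit := tendsto_finset_sum s
    (fun k (_ : k ∈ s) => (lam_monomial hγ.le hlim k).const_mul (p.coeff k))
  have htarget : ∑ k ∈ s, p.coeff k * ((((k:ℝ) + 1)⁻¹) ^ γ * A)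
      = A * ∑ k ∈ s, p.coeff k * (((k:ℝ) + 1)⁻¹) ^ γ := by
    rw [Finset.mul_sum]
    exact Finset.sum_congr rfl fun k _ => by ring
  rw [← htarget]
  refine hlimit.congr' ?_
  filter_upwards [self_mem_nhdsWithin] with ε (hε : 0 < ε)
  exact (lam_sum_eq ha hconv hε s p.coeff).symm

theorem lam_cont {a : ℕ → ℝ} (ha : ∀ j, 0 ≤ a j) (hconv : HCONV a) {γ A : ℝ} (hγ : 0 < γ)
    (hlim : Tendsto (fun x : ℝ => (1 - x) ^ γ * ∑' j : ℕ, a j * x ^ j)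
      (𝓝[<] (1 : ℝ)) (𝓝 A)) {G : ℝ → ℝ} (hGc : ContinuousOn G (Icc 0 1)) :
    Tendsto (Lam a γ G) (𝓝[>] (0:ℝ)) (𝓝 (A * J γ G)) := by
  have hA : 0 ≤ A := A_nonneg ha hlim
  obtain ⟨MG, hMG⟩ := isCompact_Icc.exists_bound_of_continuousOn hGc
  have hGb : ∀ t ∈ Ioc (0:ℝ) 1, |G t| ≤ MG := fun t ht => hMG t ⟨ht.1.le, ht.2⟩
  have hGm : AEStronglyMeasurable (fun u => G (Real.exp (-u))) (volume.restrict (Ioi 0)) := by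
    have hcomp : ContinuousOn (fun u : ℝ => G (Real.exp (-u))) (Ioi 0) := by
      refine ContinuousOn.comp hGc
        ((Real.continuous_exp.comp continuous_neg).continuousOn) (fun u hu => ?_)
      have hu' : (0:ℝ) < u := hu
      have h1 : (0:ℝ) ≤ Real.exp (-u) := (Real.exp_pos _).le
      have h2 : Real.exp (-u) ≤ 1 := Real.exp_le_one_iff.mpr (by simp; linarith)
      exact ⟨h1, h2⟩
    exact hcomp.aestronglyMeasurable measurableSet_Ioi
  rw [Metric.tendsto_nhds]
  intro c hc
  set c' := min 1 (c / (4 * (A + 1))) with hc'def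
  have hc'pos : 0 < c' := lt_min one_pos (by positivity)
  have hc'le : c' * (A + 1) ≤ c / 4 := by
    have h1 : c' ≤ c / (4 * (A + 1)) := min_le_right _ _
    have h2 : c' * (A + 1) ≤ (c / (4 * (A + 1))) * (A + 1) :=
      mul_le_mul_of_nonneg_right h1 (by linarith)
    have h3 : (c / (4 * (A + 1))) * (A + 1) = c / 4 := by
      field_simp
    linarith
  obtain ⟨p, hp⟩ := exists_polynomial_near_of_continuousOn 0 1 G hGc c' hc'pos
  set P : ℝ → ℝ := fun t => Polynomial.eval t p with hPdef
  have hPG : ∀ t ∈ Ioc (0:ℝ) 1, |P t - G t| ≤ c' := fun t ht => (hp t ⟨ht.1.le, ht.2⟩).le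
  have hPb : ∀ t ∈ Ioc (0:ℝ) 1, |P t| ≤ MG + c' := by
    intro t ht
    have h1 := hPG t ht
    have h2 := hGb t ht
    have h3 : |P t| ≤ |P t - G t| + |G t| := by
      have := abs_add_le (P t - G t) (G t)
      simpa using this
    linarith
  have hPm : AEStronglyMeasurable (fun u => P (Real.exp (-u))) (volume.restrict (Ioi 0)) :=
    ((p.continuous).comp (Real.continuous_exp.comp continuous_neg)).aestronglyMeasurable
  have hJle : |J γ P - J γ G| ≤ c' := J_diff_le hγ hPm hGm hPb hGb hPG
  have hone := lam_one_lim hγ.le hlim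
  have hev1 : ∀ᶠ ε in 𝓝[>] (0:ℝ), Lam a γ (fun _ => 1) ε < A + 1 :=
    (tendsto_order.1 hone).2 _ (by linarith)
  have hev2 : ∀ᶠ ε in 𝓝[>] (0:ℝ), dist (Lam a γ P ε) (A * J γ P) < c / 4 :=
    Metric.tendsto_nhds.mp (lam_poly ha hconv hγ hlim p) (c / 4) (by linarith)
  filter_upwards [hev1, hev2, self_mem_nhdsWithin] with ε h1 h2 (hε : 0 < ε)
  have hdiff : |Lam a γ G ε - Lam a γ P ε| ≤ c' * Lam a γ (fun _ => 1) ε :=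
    lam_diff_le ha hconv hε hGb hPb (fun t ht => by rw [abs_sub_comm]; exact hPG t ht)
  have hone_nn : 0 ≤ Lam a γ (fun _ => 1) ε :=
    lam_nonneg ha hconv hε (fun _ _ => zero_le_one)
  have hJmul : |A * J γ P - A * J γ G| ≤ A * c' := by
    rw [← mul_sub, abs_mul, abs_of_nonneg hA]
    exact mul_le_mul_of_nonneg_left hJle hA
  rw [Real.dist_eq] at h2 ⊢
  have tri1 : |Lam a γ G ε - A * J γ G| ≤ |Lam a γ G ε - A * J γ P| + |A * J γ P - A * J γ G| :=
    abs_sub_le _ _ _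
  have tri2 : |Lam a γ G ε - A * J γ P| ≤ |Lam a γ G ε - Lam a γ P ε| + |Lam a γ P ε - A * J γ P| :=
    abs_sub_le _ _ _
  have hb1 : c' * Lam a γ (fun _ => 1) ε ≤ c' * (A + 1) :=
    mul_le_mul_of_nonneg_left h1.le hc'pos.le
  have hb2 : A * c' ≤ c' * (A + 1) := by nlinarith
  linarith

noncomputable def hfun : ℝ → ℝ := fun t => if Real.exp (-1) ≤ t then t⁻¹ else 0

noncomputable def ramp (e δ t : ℝ) : ℝ := max 0 (min 1 ((t - e) / δ))

noncomputable def gup (δ t : ℝ) : ℝ :=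
  ramp (Real.exp (-1) - δ) δ t * (max t (Real.exp (-1) - δ))⁻¹

noncomputable def glo (δ t : ℝ) : ℝ :=
  ramp (Real.exp (-1)) δ t * (max t (Real.exp (-1)))⁻¹

theorem exp_neg_one_gt : (0.35:ℝ) < Real.exp (-1) := by
  rw [Real.exp_neg]
  have h := Real.exp_one_lt_d9
  have h2 : (Real.exp 1)⁻¹ > (2.7182818286:ℝ)⁻¹ := by
    apply inv_strictAnti₀ (Real.exp_pos 1) h
  have h3 : (0.35:ℝ) < (2.7182818286:ℝ)⁻¹ := by norm_num
  linarith

theorem exp_neg_one_lt : Real.exp (-1) < (0.37:ℝ) := by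
  rw [Real.exp_neg]
  have h := Real.exp_one_gt_d9
  have h2 : (Real.exp 1)⁻¹ < (2.7182818283:ℝ)⁻¹ :=
    inv_strictAnti₀ (by norm_num) h
  have h3 : (2.7182818283:ℝ)⁻¹ < 0.37 := by norm_num
  linarith

theorem ramp_nonneg (e δ t : ℝ) : 0 ≤ ramp e δ t := le_max_left _ _

theorem ramp_le_one (e δ t : ℝ) : ramp e δ t ≤ 1 :=
  max_le zero_le_one (min_le_left _ _)

theorem ramp_eq_one {e δ t : ℝ} (hδ : 0 < δ) (h : e + δ ≤ t) : ramp e δ t = 1 := by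
  unfold ramp
  rw [min_eq_left (by rw [le_div_iff₀ hδ]; linarith), max_eq_right zero_le_one]

theorem ramp_eq_zero {e δ t : ℝ} (hδ : 0 < δ) (h : t ≤ e) : ramp e δ t = 0 := by
  unfold ramp
  rw [max_eq_left]
  exact le_trans (min_le_right _ _) (div_nonpos_of_nonpos_of_nonneg (by linarith) hδ.le)

theorem hfun_bound : ∀ t ∈ Ioc (0:ℝ) 1, |hfun t| ≤ 4 := by
  intro t ht
  unfold hfun
  split_ifs with h
  · rw [abs_of_nonneg (inv_nonneg.mpr ht.1.le)]
    have h1 : (1/4:ℝ) ≤ t := le_trans (by linarith [exp_neg_one_gt]) h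
    calc t⁻¹ ≤ ((1:ℝ)/4)⁻¹ := inv_anti₀ (by norm_num) h1
      _ = 4 := by norm_num
  · norm_num

theorem hfun_meas :
    AEStronglyMeasurable (fun u => hfun (Real.exp (-u))) (volume.restrict (Ioi 0)) := by
  have hm : Measurable hfun := by
    unfold hfun
    exact Measurable.ite (measurableSet_le measurable_const measurable_id)
      measurable_inv measurable_const
  exact (hm.comp (Real.measurable_exp.comp measurable_neg)).aestronglyMeasurable

section Sandwich

variable {δ : ℝ}

theorem gup_cont (hδ : 0 < δ) (hδ10 : δ ≤ 1/10) : Continuous (gup δ) := by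
  have h1 := exp_neg_one_gt
  unfold gup ramp
  refine Continuous.mul ?_ ?_
  · exact continuous_const.max (continuous_const.min
      ((continuous_id.sub continuous_const).div_const δ))
  · refine (continuous_id.max continuous_const).inv₀ (fun t => ?_)
    have hpos : (0:ℝ) < Real.exp (-1) - δ := by linarith
    exact ne_of_gt (lt_of_lt_of_le hpos (le_max_right _ _))

theorem glo_cont (hδ : 0 < δ) : Continuous (glo δ) := by
  have h1 := exp_neg_one_gt
  unfold glo ramp
  refine Continuous.mul ?_ ?_
  · exact continuous_const.max (continuous_const.min
      ((continuous_id.sub continuous_const).div_const δ))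
  · refine (continuous_id.max continuous_const).inv₀ (fun t => ?_)
    exact ne_of_gt (lt_of_lt_of_le (by linarith) (le_max_right _ _))

theorem gup_nonneg (hδ : 0 < δ) (hδ10 : δ ≤ 1/10) (t : ℝ) : 0 ≤ gup δ t := by
  have h1 := exp_neg_one_gt
  exact mul_nonneg (ramp_nonneg _ _ _)
    (inv_nonneg.mpr (le_trans (by linarith) (le_max_right _ _)))

theorem glo_nonneg (t : ℝ) : 0 ≤ glo δ t := by
  have h1 := exp_neg_one_gt
  exact mul_nonneg (ramp_nonneg _ _ _)
    (inv_nonneg.mpr (le_trans (by linarith) (le_max_right _ _)))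

theorem gup_le (hδ : 0 < δ) (hδ10 : δ ≤ 1/10) (t : ℝ) : gup δ t ≤ 4 := by
  have h1 := exp_neg_one_gt
  have hpos : (1/4:ℝ) ≤ Real.exp (-1) - δ := by linarith
  have h2 : (max t (Real.exp (-1) - δ))⁻¹ ≤ 4 := by
    calc (max t (Real.exp (-1) - δ))⁻¹ ≤ (Real.exp (-1) - δ)⁻¹ :=
          inv_anti₀ (by linarith) (le_max_right _ _)
      _ ≤ ((1:ℝ)/4)⁻¹ := inv_anti₀ (by norm_num) hpos
      _ = 4 := by norm_num
  have h3 : 0 ≤ (max t (Real.exp (-1) - δ))⁻¹ :=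
    inv_nonneg.mpr (le_trans (by linarith) (le_max_right _ _))
  have h4 := ramp_le_one (Real.exp (-1) - δ) δ t
  have h5 := ramp_nonneg (Real.exp (-1) - δ) δ t
  unfold gup
  nlinarith

theorem glo_le (hδ : 0 < δ) (hδ10 : δ ≤ 1/10) (t : ℝ) : glo δ t ≤ 4 := by
  have h1 := exp_neg_one_gt
  have h2 : (max t (Real.exp (-1)))⁻¹ ≤ 4 := by
    calc (max t (Real.exp (-1)))⁻¹ ≤ (Real.exp (-1))⁻¹ :=
          inv_anti₀ (by linarith) (le_max_right _ _)
      _ ≤ ((1:ℝ)/4)⁻¹ := inv_anti₀ (by norm_num) (by linarith)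
      _ = 4 := by norm_num
  have h3 : 0 ≤ (max t (Real.exp (-1)))⁻¹ :=
    inv_nonneg.mpr (le_trans (by linarith) (le_max_right _ _))
  have h4 := ramp_le_one (Real.exp (-1)) δ t
  have h5 := ramp_nonneg (Real.exp (-1)) δ t
  unfold glo
  nlinarith

theorem gup_bound (hδ : 0 < δ) (hδ10 : δ ≤ 1/10) : ∀ t ∈ Ioc (0:ℝ) 1, |gup δ t| ≤ 4 :=
  fun t _ => abs_le.mpr ⟨by linarith [gup_nonneg hδ hδ10 t], gup_le hδ hδ10 t⟩

theorem glo_bound (hδ : 0 < δ) (hδ10 : δ ≤ 1/10) : ∀ t ∈ Ioc (0:ℝ) 1, |glo δ t| ≤ 4 :=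
  fun t _ => abs_le.mpr ⟨by linarith [glo_nonneg (δ := δ) t], glo_le hδ hδ10 t⟩

theorem glo_le_hfun (hδ : 0 < δ) : ∀ t ∈ Ioc (0:ℝ) 1, glo δ t ≤ hfun t := by
  intro t ht
  unfold glo hfun
  by_cases hcase : Real.exp (-1) ≤ t
  · rw [if_pos hcase, max_eq_left hcase]
    have h1 := ramp_le_one (Real.exp (-1)) δ t
    have h2 : 0 ≤ t⁻¹ := inv_nonneg.mpr ht.1.le
    nlinarith
  · rw [if_neg hcase, ramp_eq_zero hδ (by push_neg at hcase; linarith), zero_mul]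

theorem hfun_le_gup (hδ : 0 < δ) (hδ10 : δ ≤ 1/10) :
    ∀ t ∈ Ioc (0:ℝ) 1, hfun t ≤ gup δ t := by
  intro t ht
  unfold hfun
  by_cases hcase : Real.exp (-1) ≤ t
  · rw [if_pos hcase]
    unfold gup
    rw [ramp_eq_one hδ (by linarith), one_mul,
      max_eq_left (by linarith : Real.exp (-1) - δ ≤ t)]
  · rw [if_neg hcase]
    exact gup_nonneg hδ hδ10 t

theorem gup_eq_inv (hδ : 0 < δ) {t : ℝ} (h : Real.exp (-1) ≤ t) : gup δ t = t⁻¹ := by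
  unfold gup
  rw [ramp_eq_one hδ (by linarith), one_mul, max_eq_left (by linarith)]

theorem glo_eq_inv (hδ : 0 < δ) {t : ℝ} (h : Real.exp (-1) + δ ≤ t) : glo δ t = t⁻¹ := by
  unfold glo
  rw [ramp_eq_one hδ (by linarith), one_mul, max_eq_left (by linarith)]

theorem gup_eq_zero (hδ : 0 < δ) {t : ℝ} (h : t ≤ Real.exp (-1) - δ) : gup δ t = 0 := by
  unfold gup
  rw [ramp_eq_zero hδ (by linarith), zero_mul]

theorem glo_eq_zero (hδ : 0 < δ) {t : ℝ} (h : t ≤ Real.exp (-1)) : glo δ t = 0 := by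
  unfold glo
  rw [ramp_eq_zero hδ (by linarith), zero_mul]

end Sandwich

theorem J_gap {γ : ℝ} (hγ : 0 < γ) {δ : ℝ} (hδ : 0 < δ) (hδ10 : δ ≤ 1/10) :
    J γ (gup δ) - J γ (glo δ)
      ≤ (4 * ((2:ℝ) ^ (γ - 1) + (2:ℝ) ^ (1 - γ)) / Real.Gamma γ) * (8 * δ) := by
  have hΓ : 0 < Real.Gamma γ := Real.Gamma_pos_of_pos hγ
  have hth := exp_neg_one_gt
  have hth2 := exp_neg_one_lt
  set θ : ℝ := Real.exp (-1) with hθdef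
  have hθδ1 : (1/4:ℝ) ≤ θ - δ := by linarith
  have hθδ2 : θ + δ ≤ 1/2 := by linarith
  have hθδpos : (0:ℝ) < θ - δ := by linarith
  have hθδpos2 : (0:ℝ) < θ + δ := by linarith
  set Cγ : ℝ := (2:ℝ) ^ (γ - 1) + (2:ℝ) ^ (1 - γ) with hCγdef
  have hCγpos : 0 < Cγ := by positivity
  set K' : ℝ := 4 * Cγ / Real.Gamma γ with hK'def
  have hK'pos : 0 < K' := by positivity
  set aL : ℝ := Real.log (θ + δ)⁻¹ with haLdef
  set bL : ℝ := Real.log (θ - δ)⁻¹ with hbLdef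
  have hlog2lo := Real.log_two_gt_d9
  have hlog2hi := Real.log_two_lt_d9
  have hinv1 : (2:ℝ) ≤ (θ + δ)⁻¹ := by
    calc (2:ℝ) = ((1:ℝ)/2)⁻¹ := by norm_num
      _ ≤ (θ + δ)⁻¹ := inv_anti₀ hθδpos2 hθδ2
  have hinv2 : (θ - δ)⁻¹ ≤ 4 := by
    calc (θ - δ)⁻¹ ≤ ((1:ℝ)/4)⁻¹ := inv_anti₀ (by norm_num) hθδ1
      _ = 4 := by norm_num
  have haL : (1/2:ℝ) ≤ aL := by
    have h1 : Real.log 2 ≤ aL := Real.log_le_log (by norm_num) hinv1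
    linarith
  have hbL : bL ≤ 2 := by
    have h1 : bL ≤ Real.log 4 := Real.log_le_log (by positivity) hinv2
    have h2 : Real.log 4 = 2 * Real.log 2 := by
      rw [show (4:ℝ) = 2 ^ 2 by norm_num, Real.log_pow]
      push_cast
      ring
    linarith
  have haLbL : aL ≤ bL :=
    Real.log_le_log (by positivity) (inv_anti₀ hθδpos (by linarith))
  -- bound on the density on [aL, bL]
  have hW : ∀ u ∈ Icc aL bL, Real.exp (-u) * u ^ (γ - 1) ≤ Cγ := by
    intro u hu
    have hu1 : (1/2:ℝ) ≤ u := le_trans haL hu.1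
    have hu2 : u ≤ 2 := le_trans hu.2 hbL
    have hupos : (0:ℝ) < u := by linarith
    have hexp : Real.exp (-u) ≤ 1 := Real.exp_le_one_iff.mpr (by linarith)
    have hrpow : u ^ (γ - 1) ≤ Cγ := by
      rcases le_or_gt 1 γ with h1 | h1
      · have h2 : u ^ (γ - 1) ≤ (2:ℝ) ^ (γ - 1) :=
          Real.rpow_le_rpow hupos.le hu2 (by linarith)
        have h3 : (0:ℝ) ≤ (2:ℝ) ^ (1 - γ) := Real.rpow_nonneg (by norm_num) _
        rw [hCγdef]; linarith
      · have h2 : u ^ (γ - 1) ≤ ((1:ℝ)/2) ^ (γ - 1) :=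
          Real.rpow_le_rpow_of_nonpos (by norm_num) hu1 (by linarith)
        have h3 : ((1:ℝ)/2) ^ (γ - 1) = (2:ℝ) ^ (1 - γ) := by
          rw [one_div, Real.inv_rpow (by norm_num : (0:ℝ) ≤ 2),
            ← Real.rpow_neg (by norm_num : (0:ℝ) ≤ 2)]
          ring_nf
        have h4 : (0:ℝ) ≤ (2:ℝ) ^ (γ - 1) := Real.rpow_nonneg (by norm_num) _
        rw [hCγdef]; linarith
    calc Real.exp (-u) * u ^ (γ - 1) ≤ 1 * u ^ (γ - 1) :=
          mul_le_mul_of_nonneg_right hexp (Real.rpow_nonneg hupos.le _)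
      _ = u ^ (γ - 1) := one_mul _
      _ ≤ Cγ := hrpow
  -- pointwise comparison with an indicator
  have hpt : ∀ u ∈ Ioi (0:ℝ),
      gup δ (Real.exp (-u)) * (Real.exp (-u) * u ^ (γ - 1)) / Real.Gamma γ
        - glo δ (Real.exp (-u)) * (Real.exp (-u) * u ^ (γ - 1)) / Real.Gamma γ
      ≤ (Icc aL bL).indicator (fun _ => K') u := by
    intro u hu
    have hu' : (0:ℝ) < u := hu
    have htmem : Real.exp (-u) ∈ Ioc (0:ℝ) 1 :=
      ⟨Real.exp_pos _, Real.exp_le_one_iff.mpr (by linarith)⟩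
    by_cases hmem : u ∈ Icc aL bL
    · rw [indicator_of_mem hmem]
      set q : ℝ := Real.exp (-u) * u ^ (γ - 1) / Real.Gamma γ with hqdef
      have hq0 : 0 ≤ q := by
        rw [hqdef]
        positivity
      have hqC : q ≤ Cγ / Real.Gamma γ := by
        rw [hqdef]
        exact (div_le_div_iff_of_pos_right hΓ).mpr (hW u hmem)
      have h2 : gup δ (Real.exp (-u)) ≤ 4 := gup_le hδ hδ10 _
      have h3 : 0 ≤ glo δ (Real.exp (-u)) := glo_nonneg _
      have e1 : gup δ (Real.exp (-u)) * (Real.exp (-u) * u ^ (γ - 1)) / Real.Gamma γ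
          = gup δ (Real.exp (-u)) * q := by rw [hqdef]; ring
      have e2 : glo δ (Real.exp (-u)) * (Real.exp (-u) * u ^ (γ - 1)) / Real.Gamma γ
          = glo δ (Real.exp (-u)) * q := by rw [hqdef]; ring
      rw [e1, e2, hK'def]
      have h4 : gup δ (Real.exp (-u)) * q - glo δ (Real.exp (-u)) * q
          = (gup δ (Real.exp (-u)) - glo δ (Real.exp (-u))) * q := by ring
      rw [h4]
      have h5 : gup δ (Real.exp (-u)) - glo δ (Real.exp (-u)) ≤ 4 := by linarith
      calc (gup δ (Real.exp (-u)) - glo δ (Real.exp (-u))) * q ≤ 4 * q :=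
            mul_le_mul_of_nonneg_right h5 hq0
        _ ≤ 4 * (Cγ / Real.Gamma γ) := by linarith
        _ = 4 * Cγ / Real.Gamma γ := by ring
    · rw [indicator_of_notMem hmem]
      rw [mem_Icc, not_and_or] at hmem
      rcases hmem with hcase | hcase
      · push_neg at hcase
        have h1 : Real.exp u < (θ + δ)⁻¹ := by
          rw [haLdef] at hcase
          exact (Real.lt_log_iff_exp_lt (by positivity)).mp hcase
        have h2 : θ + δ < Real.exp (-u) := by
          rw [Real.exp_neg]
          calc θ + δ = ((θ + δ)⁻¹)⁻¹ := by rw [inv_inv]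
            _ < (Real.exp u)⁻¹ := inv_strictAnti₀ (Real.exp_pos u) h1
        rw [gup_eq_inv hδ (by linarith), glo_eq_inv hδ h2.le]
        simp
      · push_neg at hcase
        have h1 : (θ - δ)⁻¹ < Real.exp u := by
          rw [hbLdef] at hcase
          exact (Real.log_lt_iff_lt_exp (by positivity)).mp hcase
        have h2 : Real.exp (-u) < θ - δ := by
          rw [Real.exp_neg]
          calc (Real.exp u)⁻¹ < ((θ - δ)⁻¹)⁻¹ := inv_strictAnti₀ (by positivity) h1
            _ = θ - δ := by rw [inv_inv]
        rw [gup_eq_zero hδ h2.le, glo_eq_zero hδ (by linarith)]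
        simp
  -- integrate
  have hup_m : AEStronglyMeasurable (fun u => gup δ (Real.exp (-u))) (volume.restrict (Ioi 0)) :=
    ((gup_cont hδ hδ10).comp (Real.continuous_exp.comp continuous_neg)).aestronglyMeasurable
  have hlo_m : AEStronglyMeasurable (fun u => glo δ (Real.exp (-u))) (volume.restrict (Ioi 0)) :=
    ((glo_cont hδ).comp (Real.continuous_exp.comp continuous_neg)).aestronglyMeasurable
  have hup_i := J_integrable hγ hup_m (gup_bound hδ hδ10)
  have hlo_i := J_integrable hγ hlo_m (glo_bound hδ hδ10)
  have hind_i : IntegrableOn ((Icc aL bL).indicator (fun _ => K')) (Ioi 0) := by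
    refine Integrable.integrableOn ?_
    rw [integrable_indicator_iff measurableSet_Icc]
    exact (integrableOn_const_iff).mpr (Or.inr (by rw [Real.volume_Icc]; exact ENNReal.ofReal_lt_top))
  have hmain : J γ (gup δ) - J γ (glo δ)
      ≤ ∫ u in Ioi (0:ℝ), (Icc aL bL).indicator (fun _ => K') u := by
    unfold J
    rw [← integral_sub hup_i hlo_i]
    exact setIntegral_mono_on (hup_i.sub hlo_i) hind_i measurableSet_Ioi hpt
  have hindval : ∫ u in Ioi (0:ℝ), (Icc aL bL).indicator (fun _ => K') u ≤ K' * (bL - aL) := by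
    rw [setIntegral_indicator measurableSet_Icc, setIntegral_const]
    have h1 : volume (Ioi (0:ℝ) ∩ Icc aL bL) ≤ volume (Icc aL bL) :=
      measure_mono inter_subset_right
    rw [Real.volume_Icc] at h1
    have h2 : (volume (Ioi (0:ℝ) ∩ Icc aL bL)).toReal ≤ bL - aL := by
      calc (volume (Ioi (0:ℝ) ∩ Icc aL bL)).toReal
          ≤ (ENNReal.ofReal (bL - aL)).toReal := ENNReal.toReal_mono ENNReal.ofReal_ne_top h1
        _ = bL - aL := ENNReal.toReal_ofReal (by linarith)
    rw [smul_eq_mul]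
    calc (volume (Ioi (0:ℝ) ∩ Icc aL bL)).toReal * K' ≤ (bL - aL) * K' :=
          mul_le_mul_of_nonneg_right h2 hK'pos.le
      _ = K' * (bL - aL) := mul_comm _ _
  have hlogdiff : bL - aL ≤ 8 * δ := by
    have e1 : bL - aL = Real.log ((θ + δ) / (θ - δ)) := by
      rw [haLdef, hbLdef, Real.log_inv, Real.log_inv,
        Real.log_div (ne_of_gt hθδpos2) (ne_of_gt hθδpos)]
      ring
    have h1 : Real.log ((θ + δ) / (θ - δ)) ≤ (θ + δ) / (θ - δ) - 1 :=
      Real.log_le_sub_one_of_pos (by positivity)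
    have h2 : (θ + δ) / (θ - δ) - 1 = 2 * δ / (θ - δ) := by
      field_simp
      ring
    have h3 : 2 * δ / (θ - δ) ≤ 8 * δ := by
      rw [div_le_iff₀ hθδpos]
      nlinarith
    linarith
  calc J γ (gup δ) - J γ (glo δ)
      ≤ ∫ u in Ioi (0:ℝ), (Icc aL bL).indicator (fun _ => K') u := hmain
    _ ≤ K' * (bL - aL) := hindval
    _ ≤ K' * (8 * δ) := mul_le_mul_of_nonneg_left (by linarith) hK'pos.le
    _ = (4 * Cγ / Real.Gamma γ) * (8 * δ) := by rw [hK'def]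

theorem lam_h {a : ℕ → ℝ} (ha : ∀ j, 0 ≤ a j) (hconv : HCONV a) {γ A : ℝ} (hγ : 0 < γ)
    (hlim : Tendsto (fun x : ℝ => (1 - x) ^ γ * ∑' j : ℕ, a j * x ^ j)
      (𝓝[<] (1 : ℝ)) (𝓝 A)) :
    Tendsto (Lam a γ hfun) (𝓝[>] (0:ℝ)) (𝓝 (A * J γ hfun)) := by
  have hA : 0 ≤ A := A_nonneg ha hlim
  have hΓ : 0 < Real.Gamma γ := Real.Gamma_pos_of_pos hγ
  set K' : ℝ := 4 * ((2:ℝ) ^ (γ - 1) + (2:ℝ) ^ (1 - γ)) / Real.Gamma γ with hK'def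
  have hK'pos : 0 < K' := by rw [hK'def]; positivity
  rw [Metric.tendsto_nhds]
  intro c hc
  set δ : ℝ := min (1/10) (c / (32 * K' * (A + 1))) with hδdef
  have hδpos : 0 < δ := lt_min (by norm_num) (by positivity)
  have hδ10 : δ ≤ 1/10 := min_le_left _ _
  have hgap : K' * (8 * δ) * (A + 1) ≤ c / 4 := by
    have h1 : δ ≤ c / (32 * K' * (A + 1)) := min_le_right _ _
    have h2 : K' * (8 * δ) * (A + 1) ≤ K' * (8 * (c / (32 * K' * (A + 1)))) * (A + 1) := by
      have := mul_le_mul_of_nonneg_left h1 (by positivity : (0:ℝ) ≤ 8)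
      have h3 := mul_le_mul_of_nonneg_left this hK'pos.le
      exact mul_le_mul_of_nonneg_right h3 (by linarith)
    have h4 : K' * (8 * (c / (32 * K' * (A + 1)))) * (A + 1) = c / 4 := by
      field_simp
      ring
    linarith
  have hup_m : AEStronglyMeasurable (fun u => gup δ (Real.exp (-u))) (volume.restrict (Ioi 0)) :=
    ((gup_cont hδpos hδ10).comp (Real.continuous_exp.comp continuous_neg)).aestronglyMeasurable
  have hlo_m : AEStronglyMeasurable (fun u => glo δ (Real.exp (-u))) (volume.restrict (Ioi 0)) :=
    ((glo_cont hδpos).comp (Real.continuous_exp.comp continuous_neg)).aestronglyMeasurable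
  have hJ21 : J γ (gup δ) - J γ (glo δ) ≤ K' * (8 * δ) := by
    have := J_gap hγ hδpos hδ10
    rw [hK'def]
    linarith
  have hJh2 : J γ hfun ≤ J γ (gup δ) :=
    J_mono hγ hfun_meas hup_m hfun_bound (gup_bound hδpos hδ10) (hfun_le_gup hδpos hδ10)
  have hJ1h : J γ (glo δ) ≤ J γ hfun :=
    J_mono hγ hlo_m hfun_meas (glo_bound hδpos hδ10) hfun_bound (glo_le_hfun hδpos)
  have hev1 : ∀ᶠ ε in 𝓝[>] (0:ℝ), dist (Lam a γ (glo δ) ε) (A * J γ (glo δ)) < c / 4 :=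
    Metric.tendsto_nhds.mp
      (lam_cont ha hconv hγ hlim (Continuous.continuousOn (glo_cont hδpos))) _ (by linarith)
  have hev2 : ∀ᶠ ε in 𝓝[>] (0:ℝ), dist (Lam a γ (gup δ) ε) (A * J γ (gup δ)) < c / 4 :=
    Metric.tendsto_nhds.mp
      (lam_cont ha hconv hγ hlim (Continuous.continuousOn (gup_cont hδpos hδ10))) _ (by linarith)
  filter_upwards [hev1, hev2, self_mem_nhdsWithin] with ε h1 h2 (hε : 0 < ε)
  rw [Real.dist_eq] at h1 h2 ⊢
  obtain ⟨h1a, h1b⟩ := abs_lt.mp h1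
  obtain ⟨h2a, h2b⟩ := abs_lt.mp h2
  have hm1 : Lam a γ (glo δ) ε ≤ Lam a γ hfun ε :=
    lam_mono ha hconv hε (glo_bound hδpos hδ10) hfun_bound (glo_le_hfun hδpos)
  have hm2 : Lam a γ hfun ε ≤ Lam a γ (gup δ) ε :=
    lam_mono ha hconv hε hfun_bound (gup_bound hδpos hδ10) (hfun_le_gup hδpos hδ10)
  have hP1 : A * J γ (glo δ) ≤ A * J γ hfun := mul_le_mul_of_nonneg_left hJ1h hA
  have hP2 : A * J γ hfun ≤ A * J γ (gup δ) := mul_le_mul_of_nonneg_left hJh2 hA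
  have hP3 : A * J γ (gup δ) - A * J γ (glo δ) ≤ c / 4 := by
    have h3 : A * J γ (gup δ) - A * J γ (glo δ) = A * (J γ (gup δ) - J γ (glo δ)) := by ring
    have h4 : A * (J γ (gup δ) - J γ (glo δ)) ≤ A * (K' * (8 * δ)) := by
      apply mul_le_mul_of_nonneg_left hJ21 hA
    have h5 : A * (K' * (8 * δ)) ≤ (A + 1) * (K' * (8 * δ)) := by
      have : 0 ≤ K' * (8 * δ) := by positivity
      nlinarith
    have h6 : (A + 1) * (K' * (8 * δ)) = K' * (8 * δ) * (A + 1) := by ring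
    linarith
  exact abs_lt.mpr ⟨by linarith, by linarith⟩

theorem J_h {γ : ℝ} (hγ : 0 < γ) : J γ hfun = (Real.Gamma (1 + γ))⁻¹ := by
  have hΓ : 0 < Real.Gamma γ := Real.Gamma_pos_of_pos hγ
  unfold J
  have e1 : ∀ u ∈ Ioi (0:ℝ),
      hfun (Real.exp (-u)) * (Real.exp (-u) * u ^ (γ - 1)) / Real.Gamma γ
      = ((Iic (1:ℝ)).indicator (fun v => v ^ (γ - 1)) u) / Real.Gamma γ := by
    intro u hu
    have hu' : (0:ℝ) < u := hu
    unfold hfun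
    by_cases hcase : u ≤ 1
    · rw [indicator_of_mem (mem_Iic.mpr hcase),
        if_pos (Real.exp_le_exp.mpr (by linarith : (-1:ℝ) ≤ -u))]
      have hne : Real.exp (-u) ≠ 0 := (Real.exp_pos _).ne'
      field_simp
    · rw [indicator_of_notMem (by simpa using hcase),
        if_neg (not_le.mpr (Real.exp_lt_exp.mpr (by linarith : -u < (-1:ℝ))))]
      simp
  rw [setIntegral_congr_fun measurableSet_Ioi e1, integral_div,
    setIntegral_indicator measurableSet_Iic, Ioi_inter_Iic,
    ← intervalIntegral.integral_of_le zero_le_one,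
    integral_rpow (Or.inl (by linarith : (-1:ℝ) < γ - 1))]
  have hγ1 : γ - 1 + 1 = γ := by ring
  rw [hγ1, Real.one_rpow, Real.zero_rpow (ne_of_gt hγ), add_comm,
    Real.Gamma_add_one (ne_of_gt hγ)]
  field_simp
  norm_num

end HLT

/-- Hardy–Littlewood Tauberian theorem: if `aⱼ ≥ 0`, the power series
`∑ aⱼ xʲ` converges for `|x| < 1`, and `(1−x)^γ ∑ aⱼ xʲ → A` as `x ↑ 1`
for some `γ ≥ 0`, then `(∑_{j=0}^N aⱼ) / N^γ → A / Γ(1+γ)` as `N → ∞`. -/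
theorem hardy_littlewood_tauberian (a : ℕ → ℝ) (ha : ∀ j, 0 ≤ a j)
    (hconv : ∀ x : ℝ, |x| < 1 → Summable (fun j : ℕ => a j * x ^ j))
    (γ A : ℝ) (hγ : 0 ≤ γ)
    (hlim : Tendsto (fun x : ℝ => (1 - x) ^ γ * ∑' j : ℕ, a j * x ^ j)
      (𝓝[<] (1 : ℝ)) (𝓝 A)) :
    Tendsto (fun N : ℕ => (∑ j ∈ Finset.range (N + 1), a j) / (N : ℝ) ^ γ)
      atTop (𝓝 (A / Real.Gamma (1 + γ))) := by
  have hxmem : Ioo (0:ℝ) 1 ∈ 𝓝[<] (1:ℝ) :=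
    Ioo_mem_nhdsLT_of_mem (show (1:ℝ) ∈ Ioc (0:ℝ) 1 from ⟨one_pos, le_refl _⟩)
  rcases eq_or_lt_of_le hγ with hγ0 | hγpos
  · -- case γ = 0
    subst hγ0
    simp only [Real.rpow_zero, one_mul] at hlim
    rw [show (1:ℝ) + 0 = 1 by norm_num, Real.Gamma_one]
    simp only [Real.rpow_zero, div_one]
    have hA : 0 ≤ A := by
      refine ge_of_tendsto hlim ?_
      filter_upwards [hxmem] with x hx
      exact tsum_nonneg fun j => mul_nonneg (ha j) (pow_nonneg hx.1.le j)
    have hSle : ∀ N : ℕ, ∑ j ∈ Finset.range (N + 1), a j ≤ A := by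
      intro N
      have hcont : Continuous (fun x : ℝ => ∑ j ∈ Finset.range (N + 1), a j * x ^ j) :=
        continuous_finset_sum _ (fun j _ => continuous_const.mul (continuous_pow j))
      have hpoly : Tendsto (fun x : ℝ => ∑ j ∈ Finset.range (N + 1), a j * x ^ j)
          (𝓝[<] (1:ℝ)) (𝓝 (∑ j ∈ Finset.range (N + 1), a j)) := by
        have h2 := (hcont.tendsto 1).mono_left
          (nhdsWithin_le_nhds : 𝓝[<] (1:ℝ) ≤ 𝓝 1)
        simpa using h2
      refine le_of_tendsto_of_tendsto hpoly hlim ?_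
      filter_upwards [hxmem] with x hx
      exact Summable.sum_le_tsum (Finset.range (N + 1))
        (fun j _ => mul_nonneg (ha j) (pow_nonneg hx.1.le j))
        (hconv x (by rw [abs_of_pos hx.1]; exact hx.2))
    have hsum : Summable a := by
      refine summable_of_sum_range_le (c := A) ha (fun n => ?_)
      cases n with
      | zero => simpa using hA
      | succ m => exact hSle m
    have htsum_le : ∑' j, a j ≤ A := by
      refine Real.tsum_le_of_sum_range_le ha (fun n => ?_)
      cases n with
      | zero => simpa using hA
      | succ m => exact hSle m
    have hAle : A ≤ ∑' j, a j := by
      refine le_of_tendsto hlim ?_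
      filter_upwards [hxmem] with x hx
      refine Summable.tsum_le_tsum (fun j => ?_)
        (hconv x (by rw [abs_of_pos hx.1]; exact hx.2)) hsum
      calc a j * x ^ j ≤ a j * 1 :=
            mul_le_mul_of_nonneg_left (pow_le_one₀ hx.1.le hx.2.le) (ha j)
        _ = a j := mul_one _
    have hEq : ∑' j, a j = A := le_antisymm htsum_le hAle
    have htend := hsum.hasSum.tendsto_sum_nat
    rw [hEq] at htend
    exact htend.comp (tendsto_add_atTop_nat 1)
  · -- case γ > 0
    have hconv' : HLT.HCONV a := hconv
    have hmain := HLT.lam_h ha hconv' hγpos hlim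
    rw [HLT.J_h hγpos] at hmain
    have hseq : Tendsto (fun N : ℕ => ((N:ℝ))⁻¹) atTop (𝓝[>] (0:ℝ)) := by
      rw [tendsto_nhdsWithin_iff]
      constructor
      · exact tendsto_inv_atTop_zero.comp tendsto_natCast_atTop_atTop
      · filter_upwards [eventually_ge_atTop 1] with N hN
        have hN' : (0:ℝ) < (N:ℝ) := by
          have : (1:ℝ) ≤ (N:ℝ) := by exact_mod_cast hN
          linarith
        exact inv_pos.mpr hN'
    have hcomp := hmain.comp hseq
    rw [div_eq_mul_inv A]
    refine hcomp.congr' ?_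
    filter_upwards [eventually_ge_atTop 1] with N hN
    have hNpos : (0:ℝ) < (N:ℝ) := by
      have : (1:ℝ) ≤ (N:ℝ) := by exact_mod_cast hN
      linarith
    show HLT.Lam a γ HLT.hfun ((N:ℝ)⁻¹) = (∑ j ∈ Finset.range (N + 1), a j) / (N : ℝ) ^ γ
    unfold HLT.Lam
    have hx : ∀ j : ℕ, Real.exp (-(N:ℝ)⁻¹) ^ j = Real.exp (-((j:ℝ) / N)) := by
      intro j
      rw [← Real.exp_nat_mul]
      congr 1
      field_simp
    have h0 : ∀ j ∉ Finset.range (N + 1),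
        a j * Real.exp (-(N:ℝ)⁻¹) ^ j * HLT.hfun (Real.exp (-(N:ℝ)⁻¹) ^ j) = 0 := by
      intro j hj
      rw [Finset.mem_range, not_lt] at hj
      have h1 : (N:ℝ) < (j:ℝ) := by exact_mod_cast Nat.lt_of_succ_le hj
      have h2 : (1:ℝ) < (j:ℝ) / N := (one_lt_div hNpos).mpr h1
      have hcond : ¬ (Real.exp (-1) ≤ Real.exp (-(N:ℝ)⁻¹) ^ j) := by
        rw [hx j, not_le]
        exact Real.exp_lt_exp.mpr (by linarith)
      unfold HLT.hfun
      rw [if_neg hcond, mul_zero]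
    have hts : ∑' j : ℕ, a j * Real.exp (-(N:ℝ)⁻¹) ^ j * HLT.hfun (Real.exp (-(N:ℝ)⁻¹) ^ j)
        = ∑ j ∈ Finset.range (N + 1), a j := by
      rw [tsum_eq_sum h0]
      refine Finset.sum_congr rfl (fun j hj => ?_)
      rw [Finset.mem_range] at hj
      have h1 : (j:ℝ) ≤ (N:ℝ) := by exact_mod_cast Nat.lt_succ_iff.mp hj
      have h2 : (j:ℝ) / N ≤ 1 := by
        rw [div_le_one hNpos]
        exact h1
      have hcond : Real.exp (-1) ≤ Real.exp (-(N:ℝ)⁻¹) ^ j := by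
        rw [hx j]
        exact Real.exp_le_exp.mpr (by linarith)
      unfold HLT.hfun
      rw [if_pos hcond]
      have hne : Real.exp (-(N:ℝ)⁻¹) ^ j ≠ 0 := (pow_pos (Real.exp_pos _) j).ne'
      field_simp
    rw [hts, Real.inv_rpow (Nat.cast_nonneg N), div_eq_mul_inv]
    exact mul_comm _ _
end

section
/- Let (a_n)_{n≥0} be a sequence of strictly positive real numbers and (ζ_n)_{n≥0} a sequence of strictly positive real numbers satisfying a_n ζ_n − a_{n+1} ζ_{n+1} = a_{n+1} for all n ≥ 0. Then for every real x with |x| < 1, both power series A(x) = ∑_{n=1}^∞ a_n x^n and Z(x) = ∑_{n=0}^∞ a_n ζ_n x^n converge, and a_0 ζ_0 − A(x) = (1 − x) · Z(x). -/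
set_option maxHeartbeats 1000000


/-- Generating-function identity behind Tong's theorem: if `aₙ, ζₙ > 0` and
`aₙ ζₙ − aₙ₊₁ ζₙ₊₁ = aₙ₊₁` for all `n`, then for `|x| < 1` the series
`A(x) = ∑_{n≥1} aₙ xⁿ` and `Z(x) = ∑_{n≥0} aₙ ζₙ xⁿ` converge and
`a₀ ζ₀ − A(x) = (1 − x) Z(x)`. -/
theorem tong_generating_function_identity (a ζ : ℕ → ℝ)
    (ha : ∀ n, 0 < a n) (hζ : ∀ n, 0 < ζ n)
    (hrec : ∀ n, a n * ζ n - a (n + 1) * ζ (n + 1) = a (n + 1)) :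
    ∀ x : ℝ, |x| < 1 →
      Summable (fun n : ℕ => a (n + 1) * x ^ (n + 1)) ∧
      Summable (fun n : ℕ => a n * ζ n * x ^ n) ∧
      a 0 * ζ 0 - ∑' n : ℕ, a (n + 1) * x ^ (n + 1)
        = (1 - x) * ∑' n : ℕ, a n * ζ n * x ^ n := by
  intro x hx
  set b : ℕ → ℝ := fun n => a n * ζ n with hb
  -- b is antitone (over succ), positive, hence bounded by b 0
  have hbpos : ∀ n, 0 < b n := fun n => mul_pos (ha n) (hζ n)
  have hbanti : ∀ n, b (n + 1) ≤ b n := by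
    intro n
    simp only [hb]
    nlinarith [hrec n, ha (n+1)]
  have hmono : ∀ n, b n ≤ b 0 := by
    intro n
    induction n with
    | zero => exact le_refl _
    | succ k ih => exact (hbanti k).trans ih
  have hgeo : Summable (fun n : ℕ => b 0 * |x| ^ n) :=
    (summable_geometric_of_lt_one (abs_nonneg x) hx).mul_left _
  have hZ : Summable (fun n : ℕ => b n * x ^ n) := by
    apply Summable.of_norm_bounded hgeo
    intro n
    rw [Real.norm_eq_abs, abs_mul, abs_pow, abs_of_pos (hbpos n)]
    exact mul_le_mul_of_nonneg_right (hmono n) (pow_nonneg (abs_nonneg x) n)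
  have hZ' : Summable (fun n : ℕ => b n * x ^ (n + 1)) := by
    have : (fun n : ℕ => b n * x ^ (n + 1)) = fun n => x * (b n * x ^ n) := by
      funext n; ring
    rw [this]; exact hZ.mul_left x
  have hZ'' : Summable (fun n : ℕ => b (n + 1) * x ^ (n + 1)) :=
    (summable_nat_add_iff 1).2 hZ
  have hAeq : (fun n : ℕ => a (n + 1) * x ^ (n + 1))
      = fun n : ℕ => b n * x ^ (n + 1) - b (n + 1) * x ^ (n + 1) := by
    funext n
    rw [← sub_mul, hb]
    simp only
    rw [hrec n]
  have hA : Summable (fun n : ℕ => a (n + 1) * x ^ (n + 1)) := by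
    rw [hAeq]; exact hZ'.sub hZ''
  refine ⟨hA, hZ, ?_⟩
  have h1 : ∑' n : ℕ, b n * x ^ (n + 1) = x * ∑' n : ℕ, b n * x ^ n := by
    rw [← tsum_mul_left]
    congr 1; funext n; ring
  have h2 : ∑' n : ℕ, b (n + 1) * x ^ (n + 1) = (∑' n : ℕ, b n * x ^ n) - b 0 := by
    have := Summable.tsum_eq_zero_add hZ
    simp only [pow_zero, mul_one] at this
    linarith [this]
  have h3 : ∑' n : ℕ, a (n + 1) * x ^ (n + 1)
      = (∑' n : ℕ, b n * x ^ (n + 1)) - ∑' n : ℕ, b (n + 1) * x ^ (n + 1) := by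
    rw [hAeq, Summable.tsum_sub hZ' hZ'']
  rw [h3, h1, h2]
  ring
end

section
/- Let (a_n)_{n≥0} be a sequence of strictly positive real numbers such that ∑_{n=1}^∞ a_n converges, and let (ζ_n)_{n≥0} satisfy a_n ζ_n − a_{n+1} ζ_{n+1} = a_{n+1} for all n ≥ 0. Set c = a_0 ζ_0 − ∑_{k=1}^∞ a_k. Then for every n ≥ 0, ζ_n = (1 / a_n) · (c + ∑_{k=n+1}^∞ a_k). -/
/-- Explicit formula for the Kummer–Tong sequence: with
`c = a₀ ζ₀ − ∑_{k=1}^∞ aₖ`, one has `ζₙ = (c + ∑_{k=n+1}^∞ aₖ) / aₙ`. -/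
theorem tong_zeta_formula (a ζ : ℕ → ℝ) (ha : ∀ n, 0 < a n)
    (hsum : Summable (fun n : ℕ => a (n + 1)))
    (hrec : ∀ n, a n * ζ n - a (n + 1) * ζ (n + 1) = a (n + 1))
    (c : ℝ) (hc : c = a 0 * ζ 0 - ∑' k : ℕ, a (k + 1)) :
    ∀ n : ℕ, ζ n = (1 / a n) * (c + ∑' k : ℕ, a (n + 1 + k)) := by
  have hS : ∀ n : ℕ, Summable (fun k : ℕ => a (n + 1 + k)) := by
    intro n
    have := (summable_nat_add_iff n).2 hsum
    exact this.congr (fun k => by ring_nf)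
  have key : ∀ n : ℕ, a n * ζ n = c + ∑' k : ℕ, a (n + 1 + k) := by
    intro n
    induction n with
    | zero =>
      rw [hc]
      have : (fun k : ℕ => a (0 + 1 + k)) = fun k : ℕ => a (k + 1) := by
        funext k; congr 1; omega
      rw [this]; ring
    | succ n ih =>
      have hrec' := hrec n
      have htail : ∑' k : ℕ, a (n + 1 + k)
          = a (n + 1) + ∑' k : ℕ, a (n + 1 + 1 + k) := by
        rw [Summable.tsum_eq_zero_add (hS n)]
        congr 1
        exact tsum_congr fun k => by congr 1; omega
      have : a (n + 1) * ζ (n + 1) = a n * ζ n - a (n + 1) := by linarith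
      rw [this, ih, htail]; ring
  intro n
  have hn := (ha n).ne'
  rw [← key n]
  field_simp
end

section
/- Let (a_n)_{n≥0} be a sequence of strictly positive real numbers such that ∑_{n=1}^∞ a_n converges, and let (ζ_n)_{n≥0} satisfy a_n ζ_n − a_{n+1} ζ_{n+1} = a_{n+1} for all n ≥ 0. Suppose that a_0 ζ_0 > ∑_{n=1}^∞ a_n and that the sequence b_n = a_{n+1} / a_n, n ≥ 0, is strictly increasing. Then the sequence (ζ_n)_{n≥0} is strictly increasing. -/
open Filter Topology

/-- If `a₀ ζ₀ > ∑_{n=1}^∞ aₙ` and the ratios `bₙ = aₙ₊₁ / aₙ` are strictly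
increasing, then the Kummer–Tong sequence `ζₙ` is strictly increasing. -/
theorem tong_zeta_strictMono (a ζ : ℕ → ℝ) (ha : ∀ n, 0 < a n)
    (hsum : Summable (fun n : ℕ => a (n + 1)))
    (hrec : ∀ n, a n * ζ n - a (n + 1) * ζ (n + 1) = a (n + 1))
    (hgt : a 0 * ζ 0 > ∑' n : ℕ, a (n + 1))
    (hb : StrictMono (fun n : ℕ => a (n + 1) / a n)) :
    StrictMono ζ := by
  -- summable tails
  have hsummable : ∀ n : ℕ, Summable (fun k : ℕ => a (k + n + 1)) := fun n =>
    (summable_nat_add_iff (f := fun m => a (m + 1)) n).mpr hsum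
  set r : ℕ → ℝ := fun n => ∑' k, a (k + n + 1) with hr
  have hrstep : ∀ n, r n = a (n + 1) + r (n + 1) := by
    intro n
    rw [hr]
    simp only
    rw [Summable.tsum_eq_zero_add (hsummable n)]
    congr 1
    · congr 1; omega
    · exact tsum_congr fun k => by congr 1; omega
  have hr0 : r 0 = ∑' n : ℕ, a (n + 1) := tsum_congr fun k => by congr 1
  set C : ℝ := a 0 * ζ 0 - r 0 with hC
  have hCpos : 0 < C := by rw [hC, hr0]; linarith
  -- closed form
  have key : ∀ n, a n * ζ n = r n + C := by
    intro n
    induction n with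
    | zero => rw [hC]; ring
    | succ n ih =>
      have := hrec n
      have := hrstep n
      linarith
  -- ratios are at most 1, i.e. `a` is antitone
  have hble : ∀ n, a (n + 1) ≤ a n := by
    by_contra hcon
    push_neg at hcon
    obtain ⟨n, hn⟩ := hcon
    have hmono : ∀ m, n ≤ m → a (n + 1) ≤ a (m + 1) := by
      intro m
      induction m with
      | zero =>
        intro hm
        have hn0 : n = 0 := Nat.le_zero.mp hm
        simp [hn0]
      | succ m ih =>
        intro hm
        rcases Nat.lt_or_ge n (m + 1) with h | h
        · have hle : a (n + 1) ≤ a (m + 1) := ih (Nat.le_of_lt_succ h)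
          have hbgt : a (n + 1) / a n < a (m + 2) / a (m + 1) := hb (by omega)
          have h1 : (1 : ℝ) < a (n + 1) / a n := (one_lt_div (ha n)).mpr hn
          have h2 : a (m + 1) < a (m + 2) := by
            have := (one_lt_div (ha (m + 1))).mp (h1.trans hbgt)
            linarith
          linarith
        · have hnm : n = m + 1 := by omega
          rw [hnm]
    have htend : Tendsto (fun m : ℕ => a (m + 1)) atTop (𝓝 0) :=
      hsum.tendsto_atTop_zero
    have hev : ∀ᶠ m in atTop, a (m + 1) < a (n + 1) := by
      have := htend.eventually (gt_mem_nhds (ha (n + 1)))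
      exact this
    have hev2 : ∀ᶠ m in atTop, n ≤ m := eventually_ge_atTop n
    obtain ⟨m, h1, h2⟩ := (hev.and hev2).exists
    exact absurd (hmono m h2) (not_le.mpr h1)
  -- strict inequality on weighted tails
  have hkey2 : ∀ n, a (n + 1) * r n < a n * r (n + 1) := by
    intro n
    have hf : a (n + 1) * r n = ∑' k, a (n + 1) * a (k + n + 1) :=
      (tsum_mul_left).symm
    have hg : a n * r (n + 1) = ∑' k, a n * a (k + n + 2) := by
      rw [← tsum_mul_left]
      exact tsum_congr fun k => rfl
    rw [hf, hg]
    have hle : ∀ k : ℕ, a (n + 1) * a (k + n + 1) ≤ a n * a (k + n + 2) := by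
      intro k
      have hbb : a (n + 1) / a n < a (k + n + 1 + 1) / a (k + n + 1) :=
        hb (by omega)
      rw [div_lt_div_iff₀ (ha n) (ha (k + n + 1))] at hbb
      nlinarith [ha n, ha (k + n + 1)]
    have hlt : a (n + 1) * a (0 + n + 1) < a n * a (0 + n + 2) := by
      have hbb : a (n + 1) / a n < a (n + 1 + 1) / a (n + 1) := hb (by omega)
      rw [div_lt_div_iff₀ (ha n) (ha (n + 1))] at hbb
      simp only [Nat.zero_add]
      nlinarith [ha n, ha (n + 1)]
    exact Summable.tsum_lt_tsum_of_nonneg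
      (fun k => (mul_pos (ha _) (ha _)).le) hle hlt
      (((hsummable (n + 1)).mul_left (a n)).congr fun k => rfl)
  -- conclude
  apply strictMono_nat_of_lt_succ
  intro n
  have h1 := key n
  have h2 := key (n + 1)
  have h3 := hkey2 n
  have h4 := hble n
  have hpos : 0 < a n * a (n + 1) := mul_pos (ha n) (ha (n + 1))
  have hmain : a (n + 1) * (a n * ζ n) < a n * (a (n + 1) * ζ (n + 1)) := by
    rw [h1, h2]
    nlinarith
  have := (mul_lt_mul_iff_right₀ hpos).mp (by nlinarith : a n * a (n + 1) * ζ n < a n * a (n + 1) * ζ (n + 1))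
  exact this
end

section
/- Let (a_n)_{n≥0} be a sequence of strictly positive real numbers and (ζ_n)_{n≥0} a sequence of strictly positive real numbers satisfying a_n ζ_n − a_{n+1} ζ_{n+1} = a_{n+1} for all n ≥ 0. Then the series ∑_{n=1}^∞ a_n converges and ∑_{n=1}^∞ a_n ≤ a_0 ζ_0. -/
/-- If `aₙ, ζₙ > 0` satisfy `aₙ ζₙ − aₙ₊₁ ζₙ₊₁ = aₙ₊₁`, then `∑_{n=1}^∞ aₙ`
converges and is bounded by `a₀ ζ₀`. -/
theorem tong_sum_bound (a ζ : ℕ → ℝ) (ha : ∀ n, 0 < a n)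
    (hζ : ∀ n, 0 < ζ n)
    (hrec : ∀ n, a n * ζ n - a (n + 1) * ζ (n + 1) = a (n + 1)) :
    Summable (fun n : ℕ => a (n + 1)) ∧
      ∑' n : ℕ, a (n + 1) ≤ a 0 * ζ 0 := by
  have key : ∀ n, ∑ k ∈ Finset.range n, a (k + 1) ≤ a 0 * ζ 0 := by
    intro n
    have : ∑ k ∈ Finset.range n, a (k + 1)
        = a 0 * ζ 0 - a n * ζ n := by
      have := Finset.sum_range_sub' (fun k => a k * ζ k) n
      calc ∑ k ∈ Finset.range n, a (k + 1)
          = ∑ k ∈ Finset.range n, (a k * ζ k - a (k + 1) * ζ (k + 1)) := by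
            exact Finset.sum_congr rfl fun k _ => (hrec k).symm
        _ = a 0 * ζ 0 - a n * ζ n := this
    rw [this]
    have : 0 < a n * ζ n := mul_pos (ha n) (hζ n)
    linarith
  have hsum : Summable (fun n : ℕ => a (n + 1)) :=
    summable_of_sum_range_le (fun n => (ha (n + 1)).le) key
  exact ⟨hsum, Summable.tsum_le_of_sum_range_le hsum key⟩
end

section
/- Let (a_n)_{n≥0} be a sequence of strictly positive real numbers and let (ζ_n)_{n≥0} be defined by a given real ζ_0 and the recurrence ζ_{n+1} = ζ_n · a_n / a_{n+1} − 1 for n ≥ 0. If a_0 ζ_0 < ∑_{n=1}^∞ a_n (where the sum may be a finite value or +∞, i.e., there exists N with ∑_{k=1}^N a_k > a_0 ζ_0), then there exists an index n with ζ_n < 0. -/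
/-- If `ζₙ` is defined by the recurrence `ζₙ₊₁ = ζₙ aₙ / aₙ₊₁ − 1` and some
partial sum `∑_{k=1}^N aₖ` exceeds `a₀ ζ₀`, then some `ζₙ` is negative. -/
theorem tong_zeta_negative (a ζ : ℕ → ℝ) (ha : ∀ n, 0 < a n)
    (hrec : ∀ n, ζ (n + 1) = ζ n * a n / a (n + 1) - 1)
    (hlt : ∃ N : ℕ, a 0 * ζ 0 < ∑ k ∈ Finset.Icc 1 N, a k) :
    ∃ n, ζ n < 0 := by
  obtain ⟨N, hN⟩ := hlt
  have key : ∀ n, a n * ζ n = a 0 * ζ 0 - ∑ k ∈ Finset.Icc 1 n, a k := by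
    intro n
    induction n with
    | zero => simp
    | succ n ih =>
      have hne : a (n + 1) ≠ 0 := (ha (n + 1)).ne'
      rw [hrec n, Finset.sum_Icc_succ_top (by omega : 1 ≤ n + 1)]
      field_simp
      nlinarith [ih]
  refine ⟨N, ?_⟩
  have h := key N
  nlinarith [ha N]
end
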